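/- Let B = {b_1 < b_2 < ...} be a sequence of positive integers with b_1 = 1 and b_{i+1} > b_1 + ... + b_i for all i. Then the complement ℕ \ FS(B) is a disjoint union of nonempty finite integer intervals (gaps): specifically, for each i with b_{i+1} > s_i + 1 (where s_i = b_1 + ... + b_i), the interval (s_i, b_{i+1}) of integers is disjoint from FS(B), and every element of ℕ \ FS(B) lies in a translate by an element of FS(B) of such an interval. -/

import Mathlib

/-!
A subset sum below `b k` can only use indices `< k` (by monotonicity), so it is at most
`∑ j < k, b j`; this makes the gaps avoid `FS b`. Conversely, let `m ∉ FS b` with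
`b k ≤ m < b (k+1)`, by induction on `k`. Either `m > ∑ j ≤ k, b j` and `m` lies in a gap itself,
or `m - b k ≤ ∑ j < k, b j < b k`; then `m - b k ∉ FS b`, and adding `b k` to the translation part
of its decomposition (a subset sum `< b k`, hence not using `b k`) decomposes `m`.
-/

open Finset

/-- The set of finite subset sums of a sequence `b` (0 included as the empty sum). -/
def FS (b : ℕ → ℕ) : Set ℕ := {m | ∃ I : Finset ℕ, m = ∑ i ∈ I, b i}

section

variable {b : ℕ → ℕ}

theorem zero_mem_FS (b : ℕ → ℕ) : 0 ∈ FS b := ⟨∅, by simp⟩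

theorem subset_range_of_sum_lt (hb : Monotone b) {I : Finset ℕ} {k : ℕ}
    (h : ∑ i ∈ I, b i < b k) : I ⊆ range k := by
  intro j hj
  rw [mem_range]
  by_contra! hkj
  exact h.not_ge ((hb hkj).trans (single_le_sum (fun _ _ => Nat.zero_le _) hj))

theorem notMem_FS_of_sum_range_lt_of_lt (hb : Monotone b) {k m : ℕ}
    (hsum : ∑ i ∈ range k, b i < m) (hm : m < b k) : m ∉ FS b := by
  rintro ⟨I, rfl⟩
  exact hsum.not_ge (sum_le_sum_of_subset (subset_range_of_sum_lt hb hm))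

theorem add_mem_FS_of_lt (hb : Monotone b) {t k : ℕ} (ht : t ∈ FS b) (htk : t < b k) :
    t + b k ∈ FS b := by
  obtain ⟨I, rfl⟩ := ht
  have hk : k ∉ I := fun hk => notMem_range_self (subset_range_of_sum_lt hb htk hk)
  exact ⟨insert k I, by rw [sum_insert hk, add_comm]⟩

variable (hsuper : ∀ i, ∑ j ∈ range (i + 1), b j < b (i + 1))
include hsuper

theorem strictMono_of_superincreasing : StrictMono b :=
  strictMono_nat_of_lt_succ fun n =>
    (single_le_sum (fun _ _ => Nat.zero_le _) (self_mem_range_succ n)).trans_lt (hsuper n)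

theorem sum_range_lt_of_superincreasing (h0 : 0 < b 0) : ∀ k, ∑ j ∈ range k, b j < b k
  | 0 => by simpa using h0
  | n + 1 => hsuper n

theorem exists_FS_add_gap_of_lt (hb0 : b 0 = 1) (k : ℕ) :
    ∀ m < b k, m ∉ FS b → ∃ t ∈ FS b, ∃ i g : ℕ,
      ∑ j ∈ range (i + 1), b j < g ∧ g < b (i + 1) ∧ m = t + g := by
  have hmono := (strictMono_of_superincreasing hsuper).monotone
  induction k with
  | zero =>
    intro m hm hmFS
    obtain rfl : m = 0 := by omega
    exact absurd (zero_mem_FS b) hmFS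
  | succ k ih =>
    intro m hm hmFS
    rcases lt_or_ge m (b k) with hlt | hge
    · exact ih m hlt hmFS
    rcases lt_or_ge (∑ j ∈ range (k + 1), b j) m with hgap | hle
    · exact ⟨0, zero_mem_FS b, k, m, hgap, hm, (zero_add m).symm⟩
    have hrest : m - b k < b k := by
      have := sum_range_lt_of_superincreasing hsuper (by omega) k
      rw [sum_range_succ] at hle
      omega
    have hrestFS : m - b k ∉ FS b := fun h => hmFS <| by
      simpa [Nat.sub_add_cancel hge] using add_mem_FS_of_lt hmono h hrest
    obtain ⟨t, ht, i, g, hg_gt, hg_lt, hsplit⟩ := ih _ hrest hrestFS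
    exact ⟨t + b k, add_mem_FS_of_lt hmono ht (by omega), i, g, hg_gt, hg_lt, by omega⟩

end

theorem complement_FS_gap_structure_general
    (b : ℕ → ℕ) (hb0 : b 0 = 1)
    (hsuper : ∀ i : ℕ, (∑ j ∈ Finset.range (i + 1), b j) < b (i + 1)) :
    (∀ i m : ℕ, (∑ j ∈ Finset.range (i + 1), b j) < m → m < b (i + 1) →
       m ∉ FS b) ∧
    (∀ m : ℕ, m ∉ FS b → ∃ t ∈ FS b, ∃ i g : ℕ,
       (∑ j ∈ Finset.range (i + 1), b j) < g ∧ g < b (i + 1) ∧ m = t + g) := by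
  have hmono := strictMono_of_superincreasing hsuper
  refine ⟨fun i m => notMem_FS_of_sum_range_lt_of_lt hmono.monotone, fun m => ?_⟩
  have hm : m < b (m + 1) := (hmono.id_le m).trans_lt (hmono m.lt_succ_self)
  exact exists_FS_add_gap_of_lt hsuper hb0 (m + 1) m hm

/-- for a superincreasing sequence starting at 1, the integers in
each open interval `(s_i, b_{i+1})` avoid `FS(b)`, and every integer outside
`FS(b)` is a translate, by an element of `FS(b)`, of an element of such a gap. -/
theorem complement_FS_gap_structure
    (b : ℕ → ℕ) (hb0 : b 0 = 1) (hmono : StrictMono b)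
    (hsuper : ∀ i : ℕ, (∑ j ∈ Finset.range (i + 1), b j) < b (i + 1)) :
    (∀ i m : ℕ, (∑ j ∈ Finset.range (i + 1), b j) < m → m < b (i + 1) →
       m ∉ FS b) ∧
    (∀ m : ℕ, m ∉ FS b → ∃ t ∈ FS b, ∃ i g : ℕ,
       (∑ j ∈ Finset.range (i + 1), b j) < g ∧ g < b (i + 1) ∧ m = t + g) :=
  complement_FS_gap_structure_general b hb0 hsuper
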